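/- arXiv:1507.02384 — 2 statements merged into one kernel-verified Lean document; each statement's English description precedes it below -/
import Mathlib

section
/- Let G be a finite simple bipartite graph with bipartition (A,B), let M be a maximum matching of G, and let b ∈ B. If there is an M-alternating path that starts with a non-matching edge at an M-unsaturated vertex of A and ends at b, then b belongs to every minimum vertex cover of G. -/
/-!
König: in a bipartite graph with maximum matching `M`, the vertices of `A` not reachable, together
with the vertices of `B` reachable, by `M`-alternating paths from `M`-unsaturated vertices of `A`
form a vertex cover of `M`-saturated vertices, at most one on each edge of `M` (a reachable
unsaturated vertex of `B` would end an augmenting path). Hence a minimum vertex cover `C` has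
`|C| ≤ |M|`, so it contains exactly one endpoint of each edge of `M` and only saturated vertices.
Along the given path, starting at `a ∉ C`, a non-matching edge leaving a vertex outside `C` enters
`C` and a matching edge leaving `C` leaves it; so an edge of the path is a matching edge exactly
when it ends outside `C`, and by bipartiteness exactly when it ends in `A`. The last edge ends at
`b ∉ A`, hence in `C`.
-/

open SimpleGraph

/-- A vertex cover of a graph: a set of vertices containing at least one endpoint
of every edge. -/
def IsVertexCover {V : Type} (G : SimpleGraph V) (C : Set V) : Prop :=
  ∀ ⦃u v : V⦄, G.Adj u v → u ∈ C ∨ v ∈ C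

/-- A minimum vertex cover: a vertex cover of smallest cardinality. -/
def IsMinVertexCover {V : Type} (G : SimpleGraph V) (C : Set V) : Prop :=
  _root_.IsVertexCover G C ∧ ∀ C' : Set V, _root_.IsVertexCover G C' → C.ncard ≤ C'.ncard

/-- `(A, B)` is a bipartition of `G`: `A` and `B` are disjoint, cover all vertices,
and every edge joins a vertex of `A` to a vertex of `B`. -/
def IsBipartition {V : Type} (G : SimpleGraph V) (A B : Set V) : Prop :=
  Disjoint A B ∧ A ∪ B = Set.univ ∧
    ∀ ⦃u v : V⦄, G.Adj u v → (u ∈ A ∧ v ∈ B) ∨ (u ∈ B ∧ v ∈ A)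

/-- A matching of `G`: a set of edges of `G` that are pairwise vertex-disjoint. -/
def IsMatching' {V : Type} (G : SimpleGraph V) (M : Set (Sym2 V)) : Prop :=
  M ⊆ G.edgeSet ∧ ∀ e ∈ M, ∀ f ∈ M, e ≠ f → ∀ v : V, ¬ (v ∈ e ∧ v ∈ f)

/-- A maximum matching: a matching of largest cardinality. -/
def IsMaxMatching {V : Type} (G : SimpleGraph V) (M : Set (Sym2 V)) : Prop :=
  IsMatching' G M ∧ ∀ M' : Set (Sym2 V), IsMatching' G M' → M'.ncard ≤ M.ncard

/-- A vertex is `M`-saturated if it is an endpoint of some edge of `M`. -/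
def MSaturated {V : Type} (M : Set (Sym2 V)) (v : V) : Prop :=
  ∃ e ∈ M, v ∈ e

/-- A list of edges is `M`-alternating if consecutive edges alternate between
membership and non-membership in `M`. -/
def AlternatingEdges {V : Type} (M : Set (Sym2 V)) (l : List (Sym2 V)) : Prop :=
  List.Chain' (fun e f => (e ∈ M ↔ f ∉ M)) l

/-- The edge `e` lies on an `M`-alternating path starting at an `M`-unsaturated
vertex of `A`. -/
def OnAltPath {V : Type} (G : SimpleGraph V) (M : Set (Sym2 V)) (A : Set V)
    (e : Sym2 V) : Prop :=
  ∃ (a z : V) (p : G.Walk a z), a ∈ A ∧ ¬ MSaturated M a ∧ p.IsPath ∧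
    AlternatingEdges M p.edges ∧ e ∈ p.edges

/-- The `A`-König cover of `G` constructed from a maximum matching `M`: for each
edge `ab ∈ M` with `a ∈ A` and `b ∈ B`, put `b` into the cover if `ab` lies on an
`M`-alternating path starting at an `M`-unsaturated vertex of `A`, and otherwise
put `a` into the cover. -/
def koenigCoverFrom {V : Type} (G : SimpleGraph V) (M : Set (Sym2 V))
    (A B : Set V) : Set V :=
  {b | b ∈ B ∧ ∃ e ∈ M, b ∈ e ∧ OnAltPath G M A e} ∪
    {a | a ∈ A ∧ ∃ e ∈ M, a ∈ e ∧ ¬ OnAltPath G M A e}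

/-- `C` is the `A`-König cover of the bipartite graph `G` with bipartition `(A,B)`:
the unique minimum vertex cover such that every minimum vertex cover `C'`
satisfies `A ∩ C' ⊆ A ∩ C` and `B ∩ C ⊆ B ∩ C'`. -/
def IsKoenigCover {V : Type} (G : SimpleGraph V) (A B : Set V) (C : Set V) : Prop :=
  IsMinVertexCover G C ∧
    ∀ C' : Set V, IsMinVertexCover G C' → A ∩ C' ⊆ A ∩ C ∧ B ∩ C ⊆ B ∩ C'

/-- `G[S,T]`: the bipartite graph on the vertices of `G` whose edges are exactly
the edges of `G` with one endpoint in `S` and the other in `T`. -/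
def crossingGraph {V : Type} (G : SimpleGraph V) (S T : Set V) : SimpleGraph V where
  Adj u v := G.Adj u v ∧ ((u ∈ S ∧ v ∈ T) ∨ (u ∈ T ∧ v ∈ S))
  symm := ⟨fun u v h =>
    ⟨h.1.symm, h.2.elim (fun h' => Or.inr ⟨h'.2, h'.1⟩) (fun h' => Or.inl ⟨h'.2, h'.1⟩)⟩⟩
  loopless := ⟨fun u h => G.irrefl h.1⟩

variable {V : Type} {G : SimpleGraph V} {M N : Set (Sym2 V)} {A B S C : Set V} {u v x z : V}

theorem IsBipartition.notMem_left (hbip : IsBipartition G A B) (hv : v ∈ B) : v ∉ A :=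
  Set.disjoint_right.mp hbip.1 hv

theorem IsBipartition.mem_left_iff_of_adj (hbip : IsBipartition G A B) (huv : G.Adj u v) :
    v ∈ A ↔ u ∉ A := by
  rcases hbip.2.2 huv with ⟨hu, hv⟩ | ⟨hu, hv⟩
  · exact iff_of_false (hbip.notMem_left hv) (not_not.mpr hu)
  · exact iff_of_true hv (hbip.notMem_left hu)

theorem mSaturated_insert_iff {e : Sym2 V} :
    MSaturated (insert e M) v ↔ v ∈ e ∨ MSaturated M v := by
  simp [MSaturated]

theorem MSaturated.mono (h : MSaturated N v) (hNM : N ⊆ M) : MSaturated M v :=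
  let ⟨e, he, hve⟩ := h
  ⟨e, hNM he, hve⟩

theorem alternatingEdges_congr {l : List (Sym2 V)} (h : ∀ e ∈ l, e ∈ M ↔ e ∈ N) :
    AlternatingEdges M l ↔ AlternatingEdges N l :=
  List.IsChain.iff_of_mem_imp fun e f he hf => by rw [h e he, h f hf]

namespace IsMatching'

theorem adj (hM : IsMatching' G M) (h : s(u, v) ∈ M) : G.Adj u v :=
  G.mem_edgeSet.mp (hM.1 h)

theorem eq_of_mem_of_mem (hM : IsMatching' G M) {e f : Sym2 V} (he : e ∈ M) (hf : f ∈ M)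
    (hve : v ∈ e) (hvf : v ∈ f) : e = f :=
  by_contra fun hne => hM.2 e he f hf hne v ⟨hve, hvf⟩

theorem subset (hM : IsMatching' G M) (hNM : N ⊆ M) : IsMatching' G N :=
  ⟨hNM.trans hM.1, fun e he f hf => hM.2 e (hNM he) f (hNM hf)⟩

theorem insert_of_not_mSaturated (hM : IsMatching' G M) (huv : G.Adj u v) (hu : ¬MSaturated M u)
    (hv : ¬MSaturated M v) : IsMatching' G (insert s(u, v) M) := by
  have hfree : ∀ f ∈ M, ∀ w ∈ s(u, v), w ∉ f := by
    rintro f hf w hw hwf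
    rcases Sym2.mem_iff.mp hw with rfl | rfl
    exacts [hu ⟨f, hf, hwf⟩, hv ⟨f, hf, hwf⟩]
  refine ⟨Set.insert_subset (G.mem_edgeSet.mpr huv) hM.1, ?_⟩
  rintro e (rfl | he) f (rfl | hf) hne w ⟨hwe, hwf⟩
  · exact hne rfl
  · exact hfree f hf w hwe hwf
  · exact hfree e he w hwf hwe
  · exact hM.2 e he f hf hne w ⟨hwe, hwf⟩

theorem not_mSaturated_diff_singleton (hM : IsMatching' G M) {e : Sym2 V} (he : e ∈ M)
    (hv : v ∈ e) : ¬MSaturated (M \ {e}) v :=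
  fun ⟨_, ⟨hfM, hfe⟩, hvf⟩ => hfe (hM.eq_of_mem_of_mem hfM he hvf hv)

end IsMatching'

/-- Flipping the first two edges of the augmenting path keeps the size of the matching and
leaves a shorter augmenting path. -/
theorem IsMatching'.exists_ncard_eq_add_one [Finite V] :
    ∀ {M : Set (Sym2 V)} {x z : V} (p : G.Walk x z), IsMatching' G M → p.IsPath → x ≠ z →
      ¬MSaturated M x → ¬MSaturated M z → AlternatingEdges M p.edges →
      ∃ N, IsMatching' G N ∧ N.ncard = M.ncard + 1
  | _, _, _, .nil, _, _, hxz, _, _, _ => absurd rfl hxz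
  | M, x, _, .cons h .nil, hM, _, _, hx, hz, _ =>
    ⟨_, hM.insert_of_not_mSaturated h hx hz,
      Set.ncard_insert_of_notMem fun hm => hx ⟨_, hm, Sym2.mem_mk_left _ _⟩⟩
  | M, x, z, .cons (v := y) h (.cons (v := w) h' r), hM, hp, hxz, hx, hz, halt => by
    have hxy : s(x, y) ∉ M := fun hm => hx ⟨_, hm, Sym2.mem_mk_left _ _⟩
    have hyw : s(y, w) ∈ M := by
      by_contra hyw
      exact hxy ((List.isChain_cons_cons.mp halt).1.mpr hyw)
    set M' := insert s(x, y) (M \ {s(y, w)})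
    have hM' : IsMatching' G M' :=
      (hM.subset Set.sdiff_subset).insert_of_not_mSaturated h
        (fun hs => hx (hs.mono Set.sdiff_subset))
        (hM.not_mSaturated_diff_singleton hyw (Sym2.mem_mk_left _ _))
    have hcard : M'.ncard = M.ncard := by
      rw [Set.ncard_insert_of_notMem fun hm => hxy hm.1, Set.ncard_sdiff_singleton_add_one hyw]
    have hedges : (s(x, y) :: s(y, w) :: r.edges).Nodup := hp.isTrail.edges_nodup
    have hzy : z ≠ y := by
      rintro rfl
      exact (List.nodup_cons.mp hp.of_cons.support_nodup).1 r.end_mem_support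
    have hw : ¬MSaturated M' w := by
      rw [mSaturated_insert_iff, Sym2.mem_iff, not_or, not_or]
      refine ⟨⟨fun hwx => hx (hwx ▸ ⟨_, hyw, Sym2.mem_mk_right _ _⟩), h'.ne.symm⟩, ?_⟩
      exact hM.not_mSaturated_diff_singleton hyw (Sym2.mem_mk_right _ _)
    have hz' : ¬MSaturated M' z := by
      rw [mSaturated_insert_iff, Sym2.mem_iff, not_or, not_or]
      exact ⟨⟨hxz.symm, hzy⟩, fun hs => hz (hs.mono Set.sdiff_subset)⟩
    have halt' : AlternatingEdges M' r.edges := by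
      refine (alternatingEdges_congr fun e he => ?_).mp (List.isChain_cons_cons.mp halt).2.tail
      have hne₁ : e ≠ s(x, y) := fun h => (List.nodup_cons.mp hedges).1 (by simp [← h, he])
      have hne₂ : e ≠ s(y, w) := fun h => (List.nodup_cons.mp hedges.of_cons).1 (h ▸ he)
      simp [M', hne₁, hne₂]
    have hwz : w ≠ z := fun hwz => hz (hwz ▸ ⟨_, hyw, Sym2.mem_mk_right _ _⟩)
    obtain ⟨N, hN, hNcard⟩ :=
      IsMatching'.exists_ncard_eq_add_one r hM' hp.of_cons.of_cons hwz hw hz' halt'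
    exact ⟨N, hN, hcard ▸ hNcard⟩

theorem IsMaxMatching.mSaturated_of_alternating [Finite V] (hM : IsMaxMatching G M)
    (p : G.Walk x z) (hp : p.IsPath) (hxz : x ≠ z) (hx : ¬MSaturated M x)
    (halt : AlternatingEdges M p.edges) : MSaturated M z := by
  by_contra hz
  obtain ⟨N, hN, hcard⟩ := hM.1.exists_ncard_eq_add_one p hp hxz hx hz halt
  have := hM.2 N hN
  omega

/-- Used with `S = A` (by bipartiteness) and with `S = Cᶜ` for a vertex cover `C` containing at
most one endpoint of each edge of `M`. -/
theorem SimpleGraph.Walk.dart_edge_mem_iff_of_alternating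
    (h_nonmatch : ∀ ⦃u v⦄, G.Adj u v → s(u, v) ∉ M → u ∈ S → v ∉ S)
    (h_match : ∀ ⦃u v⦄, G.Adj u v → s(u, v) ∈ M → u ∉ S → v ∈ S) :
    ∀ {x z : V} (p : G.Walk x z), AlternatingEdges M p.edges →
      (∀ e ∈ p.edges.head?, e ∈ M ↔ x ∉ S) →
      ∀ d ∈ p.darts, d.edge ∈ M ↔ d.snd ∈ S
  | _, _, .nil, _, _ => by simp
  | x, _, .cons (v := y) h q, halt, hhead => by
    have hxy : s(x, y) ∈ M ↔ y ∈ S := by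
      have hx := hhead _ rfl
      by_cases hm : s(x, y) ∈ M
      · exact iff_of_true hm (h_match h hm (hx.mp hm))
      · exact iff_of_false hm (h_nonmatch h hm (not_not.mp (mt hx.mpr hm)))
    have hq : ∀ e ∈ q.edges.head?, e ∈ M ↔ y ∉ S := fun e he => by
      rw [← not_iff_not.mpr hxy]
      exact iff_not_comm.mp ((List.isChain_cons.mp halt).1 e he)
    intro d hd
    rcases List.mem_cons.mp hd with rfl | hd
    · exact hxy
    · exact dart_edge_mem_iff_of_alternating h_nonmatch h_match q (List.isChain_cons.mp halt).2 hq
        d hd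

theorem SimpleGraph.Walk.penultimate_edge_mem_iff_of_alternating
    (h_nonmatch : ∀ ⦃u v⦄, G.Adj u v → s(u, v) ∉ M → u ∈ S → v ∉ S)
    (h_match : ∀ ⦃u v⦄, G.Adj u v → s(u, v) ∈ M → u ∉ S → v ∈ S)
    (p : G.Walk x z) (hp : ¬p.Nil) (halt : AlternatingEdges M p.edges)
    (hx : ¬MSaturated M x) (hxS : x ∈ S) : s(p.penultimate, z) ∈ M ↔ z ∈ S := by
  refine p.dart_edge_mem_iff_of_alternating h_nonmatch h_match halt ?_ _
    (p.lastDart_mem_darts hp)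
  cases p with
  | nil => simp
  | cons h q =>
    rintro e ⟨⟩
    exact iff_of_false (fun hm => hx ⟨_, hm, Sym2.mem_mk_left _ _⟩) (not_not.mpr hxS)

theorem IsBipartition.penultimate_edge_mem_iff (hbip : IsBipartition G A B) (p : G.Walk x z)
    (hp : ¬p.Nil) (halt : AlternatingEdges M p.edges) (hx : ¬MSaturated M x) (hxA : x ∈ A) :
    s(p.penultimate, z) ∈ M ↔ z ∈ A :=
  p.penultimate_edge_mem_iff_of_alternating
    (fun _ _ huv _ hu => (hbip.mem_left_iff_of_adj huv).not.mpr (not_not.mpr hu))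
    (fun _ _ huv _ hu => (hbip.mem_left_iff_of_adj huv).mpr hu) hp halt hx hxA

/-- A set of distinct representatives of some of the edges of `M`. -/
def IsPartialTransversal (M : Set (Sym2 V)) (C : Set V) : Prop :=
  (∀ v ∈ C, MSaturated M v) ∧ ∀ ⦃u v⦄, s(u, v) ∈ M → u ∈ C → v ∉ C

theorem IsPartialTransversal.ncard_le [Finite V] (hC : IsPartialTransversal M C) :
    C.ncard ≤ M.ncard := by
  choose e heM hve using hC.1
  rw [← Nat.card_coe_set_eq, ← Nat.card_coe_set_eq]
  refine Nat.card_le_card_of_injective (fun v : C => (⟨e v v.2, heM v v.2⟩ : M)) ?_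
  rintro ⟨u, hu⟩ ⟨v, hv⟩ huv
  have he : e u hu = e v hv := congrArg Subtype.val huv
  by_contra hne
  have huv' : e u hu = s(u, v) :=
    (Sym2.mem_and_mem_iff fun h => hne (Subtype.ext h)).mp ⟨hve u hu, he ▸ hve v hv⟩
  exact hC.2 (huv' ▸ heM u hu) hu hv

/-- The endpoints in `C` of the edges of `M` are distinct, so if `C` is not larger than `M` they
exhaust `C`. -/
theorem IsVertexCover.isPartialTransversal_of_ncard_le [Finite V] (hM : IsMatching' G M)
    (hC : _root_.IsVertexCover G C) (hCM : C.ncard ≤ M.ncard) : IsPartialTransversal M C := by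
  have hcover : ∀ e : M, ∃ c : C, c.1 ∈ e.1 := by
    rintro ⟨e, he⟩
    induction e using Sym2.ind with
    | h x y =>
      rcases hC (hM.adj he) with hx | hy
      exacts [⟨⟨x, hx⟩, Sym2.mem_mk_left _ _⟩, ⟨⟨y, hy⟩, Sym2.mem_mk_right _ _⟩]
  choose ψ hψ using hcover
  have hinj : Function.Injective ψ := fun e f hef =>
    Subtype.ext (hM.eq_of_mem_of_mem e.2 f.2 (hψ e) (hef ▸ hψ f))
  have hsurj : Function.Surjective ψ :=
    (hinj.bijective_of_nat_card_le (by simpa only [Nat.card_coe_set_eq] using hCM)).2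
  have hmatched : ∀ c : C, ∃ e : M, ψ e = c ∧ c.1 ∈ e.1 := fun c =>
    let ⟨e, he⟩ := hsurj c
    ⟨e, he, he ▸ hψ e⟩
  refine ⟨fun v hv => ?_, fun u v huv hu hv => ?_⟩
  · obtain ⟨e, -, hve⟩ := hmatched ⟨v, hv⟩
    exact ⟨e, e.2, hve⟩
  · obtain ⟨e, he, hue⟩ := hmatched ⟨u, hu⟩
    obtain ⟨f, hf, hvf⟩ := hmatched ⟨v, hv⟩
    have hef : e = f := Subtype.ext <|
      (hM.eq_of_mem_of_mem e.2 huv hue (Sym2.mem_mk_left _ _)).trans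
        (hM.eq_of_mem_of_mem f.2 huv hvf (Sym2.mem_mk_right _ _)).symm
    exact (hM.adj huv).ne (congrArg Subtype.val (he.symm.trans (hef ▸ hf)))

def AltReachable (G : SimpleGraph V) (M : Set (Sym2 V)) (A : Set V) (v : V) : Prop :=
  ∃ (a : V) (p : G.Walk a v),
    a ∈ A ∧ ¬MSaturated M a ∧ p.IsPath ∧ AlternatingEdges M p.edges

theorem altReachable_of_not_mSaturated (hv : v ∈ A) (hvU : ¬MSaturated M v) :
    AltReachable G M A v :=
  ⟨v, .nil, hv, hvU, Walk.IsPath.nil, List.isChain_nil⟩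

theorem altReachable_of_mem_support {p : G.Walk x z} (hx : x ∈ A) (hxU : ¬MSaturated M x)
    (hp : p.IsPath) (halt : AlternatingEdges M p.edges) (hv : v ∈ p.support) :
    AltReachable G M A v := by
  classical
  exact ⟨x, p.takeUntil v hv, hx, hxU, hp.takeUntil hv,
    List.IsChain.prefix halt (p.edges_takeUntil_prefix_edges hv)⟩

namespace AltReachable

theorem of_adj (hbip : IsBipartition G A B) (hu : AltReachable G M A u) (huv : G.Adj u v)
    (huvM : s(u, v) ∈ M ↔ u ∉ A) : AltReachable G M A v := by
  obtain ⟨a, p, ha, haU, hp, halt⟩ := hu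
  by_cases hv : v ∈ p.support
  · exact altReachable_of_mem_support ha haU hp halt hv
  refine ⟨a, p.concat huv, ha, haU, hp.concat hv huv, ?_⟩
  rw [Walk.edges_concat, List.concat_eq_append]
  refine List.isChain_append.mpr ⟨halt, List.isChain_singleton _, fun e he f hf => ?_⟩
  obtain ⟨hne, rfl⟩ := List.mem_getLast?_eq_getLast he
  obtain rfl : f = s(u, v) := by simpa using hf.symm
  rw [Walk.getLast_edges_eq_mk_penultimate_end,
    hbip.penultimate_edge_mem_iff p (Walk.edges_eq_nil.not.mp hne) halt haU ha, huvM, not_not]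

theorem of_mem_left_of_mem (hbip : IsBipartition G A B) (hM : IsMatching' G M)
    (hu : AltReachable G M A u) (huA : u ∈ A) (huv : s(u, v) ∈ M) : AltReachable G M A v := by
  obtain ⟨a, p, ha, haU, hp, halt⟩ := hu
  have hnil : ¬p.Nil := fun hnil => haU (hnil.eq ▸ ⟨_, huv, Sym2.mem_mk_left _ _⟩)
  have hlast : s(p.penultimate, u) ∈ M :=
    (hbip.penultimate_edge_mem_iff p hnil halt haU ha).mpr huA
  have hpen : p.penultimate = v := Sym2.congr_left.mp <|
    (hM.eq_of_mem_of_mem hlast huv (Sym2.mem_mk_right _ _) (Sym2.mem_mk_left _ _)).trans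
      Sym2.eq_swap
  exact altReachable_of_mem_support ha haU hp halt
    (hpen ▸ List.mem_of_mem_dropLast (p.penultimate_mem_dropLast_support hnil))

theorem iff_of_mem (hbip : IsBipartition G A B) (hM : IsMatching' G M) (huv : s(u, v) ∈ M) :
    AltReachable G M A u ↔ AltReachable G M A v := by
  have imp : ∀ {u v}, s(u, v) ∈ M → AltReachable G M A u → AltReachable G M A v := by
    intro u v huv hu
    by_cases huA : u ∈ A
    · exact hu.of_mem_left_of_mem hbip hM huA huv
    · exact hu.of_adj hbip (hM.adj huv) (iff_of_true huv huA)
  exact ⟨imp huv, imp (Sym2.eq_swap ▸ huv)⟩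

theorem mSaturated [Finite V] (hbip : IsBipartition G A B) (hM : IsMaxMatching G M)
    (hv : AltReachable G M A v) (hvB : v ∈ B) : MSaturated M v :=
  let ⟨_, p, ha, haU, hp, halt⟩ := hv
  hM.mSaturated_of_alternating p hp (fun h => hbip.notMem_left hvB (h ▸ ha)) haU halt

end AltReachable

/-- König's cover. -/
def alternatingCover (G : SimpleGraph V) (M : Set (Sym2 V)) (A B : Set V) : Set V :=
  {v | v ∈ A ∧ ¬AltReachable G M A v ∨ v ∈ B ∧ AltReachable G M A v}

theorem isVertexCover_alternatingCover (hbip : IsBipartition G A B) (hM : IsMatching' G M) :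
    _root_.IsVertexCover G (alternatingCover G M A B) := by
  have key : ∀ ⦃u v⦄, G.Adj u v → u ∈ A → v ∈ B →
      u ∈ alternatingCover G M A B ∨ v ∈ alternatingCover G M A B := by
    intro u v huv huA hvB
    by_cases hu : AltReachable G M A u
    · refine Or.inr (Or.inr ⟨hvB, ?_⟩)
      by_cases hm : s(u, v) ∈ M
      · exact hu.of_mem_left_of_mem hbip hM huA hm
      · exact hu.of_adj hbip huv (iff_of_false hm (not_not.mpr huA))
    · exact Or.inl (Or.inl ⟨huA, hu⟩)
  intro u v huv
  rcases hbip.2.2 huv with ⟨hu, hv⟩ | ⟨hu, hv⟩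
  · exact key huv hu hv
  · exact (key huv.symm hv hu).symm

theorem isPartialTransversal_alternatingCover [Finite V] (hbip : IsBipartition G A B)
    (hM : IsMaxMatching G M) : IsPartialTransversal M (alternatingCover G M A B) := by
  refine ⟨?_, fun u v huv hu hv => ?_⟩
  · rintro v (⟨hvA, hv⟩ | ⟨hvB, hv⟩)
    · by_contra hvU
      exact hv (altReachable_of_not_mSaturated hvA hvU)
    · exact hv.mSaturated hbip hM hvB
  · have hZ := AltReachable.iff_of_mem hbip hM.1 huv
    have hA := hbip.mem_left_iff_of_adj (hM.1.adj huv)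
    have hBu : u ∈ B → u ∉ A := hbip.notMem_left
    have hBv : v ∈ B → v ∉ A := hbip.notMem_left
    simp only [alternatingCover, Set.mem_ofPred_eq] at hu hv
    tauto

theorem IsMaxMatching.exists_isVertexCover_ncard_le [Finite V] (hbip : IsBipartition G A B)
    (hM : IsMaxMatching G M) : ∃ C, _root_.IsVertexCover G C ∧ C.ncard ≤ M.ncard :=
  ⟨_, isVertexCover_alternatingCover hbip hM.1,
    (isPartialTransversal_alternatingCover hbip hM).ncard_le⟩

/-- If there is an `M`-alternating path that starts with a
non-matching edge at an `M`-unsaturated vertex of `A` and ends at `b ∈ B`, then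
`b` belongs to every minimum vertex cover of `G`. -/
theorem mem_minVertexCover_of_altPath {V : Type} [Fintype V] (G : SimpleGraph V)
    (A B : Set V) (hbip : IsBipartition G A B)
    (M : Set (Sym2 V)) (hM : IsMaxMatching G M)
    (b : V) (hb : b ∈ B)
    (hpath : ∃ (a : V) (p : G.Walk a b), a ∈ A ∧ ¬ MSaturated M a ∧
      p.IsPath ∧ AlternatingEdges M p.edges ∧
      ∃ e ∈ p.edges.head?, e ∉ M) :
    ∀ C : Set V, IsMinVertexCover G C → b ∈ C := by
  obtain ⟨a, p, haA, haU, -, halt, -⟩ := hpath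
  intro C hC
  obtain ⟨K, hK, hKM⟩ := hM.exists_isVertexCover_ncard_le hbip
  have hCM : IsPartialTransversal M C :=
    hC.1.isPartialTransversal_of_ncard_le hM.1 ((hC.2 K hK).trans hKM)
  have haC : a ∉ C := fun haC => haU (hCM.1 a haC)
  have hp : ¬p.Nil := Walk.not_nil_of_ne fun hab => hbip.notMem_left hb (hab ▸ haA)
  have hlastA : s(p.penultimate, b) ∈ M ↔ b ∈ A :=
    hbip.penultimate_edge_mem_iff p hp halt haU haA
  have hlastC : s(p.penultimate, b) ∈ M ↔ b ∈ Cᶜ :=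
    p.penultimate_edge_mem_iff_of_alternating
      (fun _ _ huv _ hu => not_not.mpr ((hC.1 huv).resolve_left hu))
      (fun _ _ _ huv hu => hCM.2 huv (not_not.mp hu)) hp halt haU haC
  by_contra hbC
  exact hbip.notMem_left hb (hlastA.mp (hlastC.mpr hbC))
end

section
/- Let G be a finite simple graph and let (A,B,X) be a partition of V(G) into three pairwise disjoint (possibly empty) sets. Let C_A be the A-König cover of the bipartite graph G[A, B ∪ X], and let C be any minimum vertex cover of the bipartite graph G[A ∪ X, B]. Then A ∩ C ⊆ A ∩ C_A. -/
open SimpleGraph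

/-! Let `C` be a minimum vertex cover of `G[A', B]` and `D` one of `G[A, B']`, where
`A ⊆ A'`, `B ⊆ B'` and `A ∩ B = ∅`. Put `R = (A ∩ C) \ D` and let `N` be the set of
vertices of `B \ C` with a neighbour in `R`. Removing `R` from `C` and adding `N` gives
a cover of `G[A', B]`, so `|R| ≤ |N|` by minimality of `C`; and `N ⊆ D`, since the edges
from `R` to `N` lie in `G[A, B']` and miss `R`. Removing `N` from `D` and adding `R`
gives a cover of `G[A, B']`: an edge `uv` with `u ∈ A \ D` and `v ∈ N` lies in
`G[A', B]`, so `u ∈ C`, i.e. `u ∈ R`. This cover has at most `|D|` vertices and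
contains `A ∩ C`, so the `A`-König cover of `G[A, B']` contains `A ∩ C` too. -/

section

variable {V : Type} {G H : SimpleGraph V}

def neighborsIn (G : SimpleGraph V) (R T : Set V) : Set V :=
  {t | t ∈ T ∧ ∃ r ∈ R, G.Adj r t}

theorem neighborsIn_subset (R T : Set V) : neighborsIn G R T ⊆ T :=
  fun _ ht => ht.1

theorem exists_isMinVertexCover (G : SimpleGraph V) : ∃ C, IsMinVertexCover G C := by
  obtain ⟨C, hC, hmin⟩ := (measure Set.ncard).wf.has_min {C | _root_.IsVertexCover G C}
    ⟨Set.univ, fun _ _ _ => Or.inl trivial⟩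
  exact ⟨C, hC, fun C' hC' => not_lt.mp (hmin C' hC')⟩

theorem isVertexCover_crossingGraph_iff {S T C : Set V} :
    _root_.IsVertexCover (crossingGraph G S T) C ↔
      ∀ ⦃u v⦄, u ∈ S → v ∈ T → G.Adj u v → u ∈ C ∨ v ∈ C := by
  refine ⟨fun h u v hu hv huv => h ⟨huv, .inl ⟨hu, hv⟩⟩, fun h u v ⟨huv, hside⟩ => ?_⟩
  rcases hside with ⟨hu, hv⟩ | ⟨hu, hv⟩
  · exact h hu hv huv
  · exact (h hv hu huv.symm).symm

theorem IsVertexCover.neighborsIn_subset {S T D R T' : Set V}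
    (hD : _root_.IsVertexCover (crossingGraph G S T) D) (hRS : R ⊆ S) (hRD : Disjoint R D)
    (hT' : T' ⊆ T) : neighborsIn G R T' ⊆ D := by
  rintro t ⟨htT', r, hr, hrt⟩
  exact (isVertexCover_crossingGraph_iff.mp hD (hRS hr) (hT' htT') hrt).resolve_left
    (hRD.notMem_of_mem_left hr)

theorem IsVertexCover.diff_union_neighborsIn {S T C R : Set V}
    (hC : _root_.IsVertexCover (crossingGraph G S T) C) (hRT : Disjoint R T) :
    _root_.IsVertexCover (crossingGraph G S T) (C \ R ∪ neighborsIn G R (T \ C)) := by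
  refine isVertexCover_crossingGraph_iff.mpr fun u v hu hv huv => ?_
  have hvR : v ∉ R := hRT.notMem_of_mem_right hv
  by_cases hvC : v ∈ C
  · exact .inr (.inl ⟨hvC, hvR⟩)
  have huC : u ∈ C := (isVertexCover_crossingGraph_iff.mp hC hu hv huv).resolve_right hvC
  by_cases huR : u ∈ R
  · exact .inr (.inr ⟨⟨hv, hvC⟩, u, huR, huv⟩)
  · exact .inl (.inl ⟨huC, huR⟩)

theorem IsVertexCover.diff_neighborsIn_union {A A' B B' C D : Set V} (hAA' : A ⊆ A')
    (hAB : Disjoint A B) (hC : _root_.IsVertexCover (crossingGraph G A' B) C)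
    (hD : _root_.IsVertexCover (crossingGraph G A B') D) :
    _root_.IsVertexCover (crossingGraph G A B')
      (D \ neighborsIn G ((A ∩ C) \ D) (B \ C) ∪ (A ∩ C) \ D) := by
  refine isVertexCover_crossingGraph_iff.mpr fun u v hu hv huv => ?_
  by_cases huD : u ∈ D
  · exact .inl (.inl ⟨huD, fun huN => hAB.notMem_of_mem_left hu huN.1.1⟩)
  have hvD : v ∈ D := (isVertexCover_crossingGraph_iff.mp hD hu hv huv).resolve_left huD
  by_cases hvN : v ∈ neighborsIn G ((A ∩ C) \ D) (B \ C)
  · obtain ⟨⟨hvB, hvC⟩, -⟩ := hvN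
    have huC : u ∈ C :=
      (isVertexCover_crossingGraph_iff.mp hC (hAA' hu) hvB huv).resolve_right hvC
    exact .inl (.inr ⟨⟨hu, huC⟩, huD⟩)
  · exact .inr (.inl ⟨hvD, hvN⟩)

variable [Finite V]

theorem IsMinVertexCover.ncard_le_of_isVertexCover_diff_union {C R N : Set V}
    (hC : IsMinVertexCover H C) (hRC : R ⊆ C)
    (hcov : _root_.IsVertexCover H (C \ R ∪ N)) : R.ncard ≤ N.ncard := by
  have hsplit : (C \ R).ncard + R.ncard = C.ncard := Set.ncard_sdiff_add_ncard_of_subset hRC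
  have hmin : C.ncard ≤ (C \ R ∪ N).ncard := hC.2 _ hcov
  have hunion : (C \ R ∪ N).ncard ≤ (C \ R).ncard + N.ncard := Set.ncard_union_le _ _
  omega

theorem IsMinVertexCover.diff_union {D N R : Set V} (hD : IsMinVertexCover H D)
    (hND : N ⊆ D) (hcov : _root_.IsVertexCover H (D \ N ∪ R)) (hRN : R.ncard ≤ N.ncard) :
    IsMinVertexCover H (D \ N ∪ R) := by
  refine ⟨hcov, fun C' hC' => ?_⟩
  have hsplit : (D \ N).ncard + N.ncard = D.ncard := Set.ncard_sdiff_add_ncard_of_subset hND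
  have hunion : (D \ N ∪ R).ncard ≤ (D \ N).ncard + R.ncard := Set.ncard_union_le _ _
  have hmin : D.ncard ≤ C'.ncard := hD.2 C' hC'
  omega

theorem exists_isMinVertexCover_crossingGraph_superset_inter {A A' B B' C : Set V}
    (hAA' : A ⊆ A') (hBB' : B ⊆ B') (hAB : Disjoint A B)
    (hC : IsMinVertexCover (crossingGraph G A' B) C) :
    ∃ D, IsMinVertexCover (crossingGraph G A B') D ∧ A ∩ C ⊆ D := by
  obtain ⟨D, hD⟩ := exists_isMinVertexCover (crossingGraph G A B')
  set R := (A ∩ C) \ D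
  set N := neighborsIn G R (B \ C)
  have hRA : R ⊆ A := fun _ hr => hr.1.1
  have hNB : N ⊆ B := (neighborsIn_subset _ _).trans Set.sdiff_subset
  have hND : N ⊆ D := hD.1.neighborsIn_subset hRA Set.disjoint_sdiff_left
    (Set.sdiff_subset.trans hBB')
  have hRN : R.ncard ≤ N.ncard := hC.ncard_le_of_isVertexCover_diff_union
    (fun _ hr => hr.1.2) (hC.1.diff_union_neighborsIn (hAB.mono_left hRA))
  refine ⟨D \ N ∪ R, hD.diff_union hND (hC.1.diff_neighborsIn_union hAA' hAB hD.1) hRN, ?_⟩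
  intro x hx
  by_cases hxD : x ∈ D
  · exact .inl ⟨hxD, fun hxN => hAB.notMem_of_mem_left hx.1 (hNB hxN)⟩
  · exact .inr ⟨hx, hxD⟩

end

theorem inter_A_subset_koenig_general {V : Type} [Fintype V] (G : SimpleGraph V)
    (A B X : Set V)
    (hAB : Disjoint A B)
    (CA : Set V) (hCA : IsKoenigCover (crossingGraph G A (B ∪ X)) A (B ∪ X) CA)
    (C : Set V) (hC : IsMinVertexCover (crossingGraph G (A ∪ X) B) C) :
    A ∩ C ⊆ A ∩ CA := by
  obtain ⟨D, hD, hCD⟩ := exists_isMinVertexCover_crossingGraph_superset_inter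
    Set.subset_union_left Set.subset_union_left hAB hC
  exact fun a ha => (hCA.2 D hD).1 ⟨ha.1, hCD ha⟩

/-- For a tripartition `(A,B,X)` of the vertices of `G`, the
`A`-König cover `C_A` of `G[A, B ∪ X]` and any minimum vertex cover `C` of
`G[A ∪ X, B]` satisfy `A ∩ C ⊆ A ∩ C_A`. -/
theorem inter_A_subset_koenig {V : Type} [Fintype V] (G : SimpleGraph V)
    (A B X : Set V)
    (hAB : Disjoint A B) (hAX : Disjoint A X) (hBX : Disjoint B X)
    (hU : A ∪ B ∪ X = Set.univ)
    (CA : Set V) (hCA : IsKoenigCover (crossingGraph G A (B ∪ X)) A (B ∪ X) CA)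
    (C : Set V) (hC : IsMinVertexCover (crossingGraph G (A ∪ X) B) C) :
    A ∩ C ⊆ A ∩ CA :=
  inter_A_subset_koenig_general G A B X hAB CA hCA C hC
end
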